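/- arXiv:2301.09972 — 2 statements merged into one kernel-verified Lean document; each statement's English description precedes it below -/
import Mathlib

section
/- Let P ⊂ ℝ^d be a convex polytope of dimension d, let V ⊂ P be a finite set containing every vertex of P, let Γ be a triangulation of P on V, and let x be a point of the interior of P with x ∉ V. Then there exists a triangulation Γ' of P on V ∪ {x} with |Γ'| ≥ |Γ| + d. -/
/-!
The new triangulation is the stellar subdivision at `x`. The point `x` lies in the relative
interior of a face `F` of the triangulation, and the simplices whose hull contains `x` (the star
of `x`) are exactly those having `F` as a face. Replacing each of them, `W`, by the cones
`insert x (W.erase v)` for `v ∈ F` again gives a triangulation, on `V ∪ {x}`; all the required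
identities are computations with barycentric coordinates in `W`.

If the star has `s` simplices and `f = |F| ≥ 2` (as `x` is not a vertex), the number of simplices
grows by `s (f - 1)`. Since `x` is interior, the star covers a neighbourhood of `x`, and a
dimension count shows `s + f ≥ d + 2`: with fewer simplices there would be a direction transversal
to `F` along which the sum of the coordinates off `F` decreases in every simplex of the star, so
that moving from `x` in that direction leaves the star. Hence `s (f - 1) ≥ s + f - 2 ≥ d`.
-/

/-- `Γ` is a triangulation of the `d`-dimensional convex polytope `P ⊂ ℝ^d` on the
set `V ⊆ P`. -/
def IsTriangulation (d : ℕ) (P : Set (Fin d → ℝ)) (V : Set (Fin d → ℝ))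
    (Γ : Finset (Finset (Fin d → ℝ))) : Prop :=
  (∀ W ∈ Γ, W.card = d + 1 ∧
      AffineIndependent ℝ (fun x : (W : Set (Fin d → ℝ)) => (x : Fin d → ℝ)) ∧
      (W : Set (Fin d → ℝ)) ⊆ V) ∧
  (∀ x ∈ V, ∃ W ∈ Γ, x ∈ W) ∧
  (∀ W ∈ Γ, ∀ W' ∈ Γ, ∃ U : Finset (Fin d → ℝ), U ⊆ W ∧ U ⊆ W' ∧
      convexHull ℝ (W : Set (Fin d → ℝ)) ∩ convexHull ℝ (W' : Set (Fin d → ℝ))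
        = convexHull ℝ (U : Set (Fin d → ℝ))) ∧
  P = ⋃ W ∈ Γ, convexHull ℝ (W : Set (Fin d → ℝ))

open Finset Module Filter Topology

section

variable {E : Type*} [AddCommGroup E] [Module ℝ E]

lemma exists_affineBasis_coe [FiniteDimensional ℝ E] {W : Finset E}
    (hW : AffineIndependent ℝ ((↑) : W → E)) (hcard : W.card = finrank ℝ E + 1) :
    ∃ b : AffineBasis W ℝ E, ⇑b = (↑) :=
  ⟨⟨_, hW, hW.affineSpan_eq_top_iff_card_eq_finrank_add_one.mpr (by simpa using hcard)⟩,
    rfl⟩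

lemma convexHull_insert_subset [DecidableEq E] {A W : Finset E} {x : E} (hAW : A ⊆ W)
    (hx : x ∈ convexHull ℝ (W : Set E)) :
    convexHull ℝ ((insert x A : Finset E) : Set E) ⊆ convexHull ℝ (W : Set E) := by
  refine convexHull_min ?_ (convex_convexHull ℝ _)
  rw [coe_insert]
  exact Set.insert_subset hx ((coe_subset.mpr hAW).trans (subset_convexHull ℝ _))

end

section LinearAlgebra

variable {K M ι : Type*} [Field K] [LinearOrder K] [IsStrictOrderedRing K] [AddCommGroup M]
  [Module K M] [FiniteDimensional K M] [Fintype ι] [Nonempty ι]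

lemma exists_ne_zero_forall_apply_nonpos (φ : ι → M →ₗ[K] K)
    (h : Fintype.card ι ≤ finrank K M) : ∃ m ≠ 0, ∀ i, φ i m ≤ 0 := by
  set Φ := LinearMap.pi φ
  by_cases hΦ : Function.Injective Φ
  · have hdim : finrank K M = finrank K (ι → K) := by
      have := LinearMap.finrank_le_finrank_of_injective hΦ
      rw [finrank_pi] at *
      omega
    obtain ⟨m, hm⟩ := (LinearMap.injective_iff_surjective_of_finrank_eq_finrank hdim).mp hΦ
      (fun _ => -1)
    refine ⟨m, fun h0 => ?_, fun i => ?_⟩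
    · have := congrFun hm (Classical.arbitrary ι)
      simp [h0, Φ] at this
    · have := congrFun hm i
      simp only [Φ, LinearMap.pi_apply] at this
      rw [this]
      exact neg_nonpos.mpr zero_le_one
  · rw [injective_iff_map_eq_zero] at hΦ
    push Not at hΦ
    obtain ⟨m, hm, hm0⟩ := hΦ
    exact ⟨m, hm0, fun i => (congrFun hm i).le⟩

lemma Submodule.exists_notMem_forall_apply_nonpos (L : Submodule K M) (φ : ι → M →ₗ[K] K)
    (h : Fintype.card ι + finrank K L ≤ finrank K M) : ∃ m ∉ L, ∀ i, φ i m ≤ 0 := by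
  obtain ⟨N, hLN⟩ := L.exists_isCompl
  obtain ⟨n, hn0, hn⟩ := exists_ne_zero_forall_apply_nonpos (fun i => (φ i).comp N.subtype)
    (by have := Submodule.finrank_add_eq_of_isCompl hLN; omega)
  refine ⟨n, fun hnL => hn0 ?_, hn⟩
  exact Subtype.ext (Submodule.disjoint_def.mp hLN.disjoint _ hnL n.2)

end LinearAlgebra

namespace AffineBasis

variable {E : Type*} [AddCommGroup E] [Module ℝ E] [DecidableEq E] {W : Finset E}

noncomputable def vertexCoord (b : AffineBasis W ℝ E) (w : E) : E →ᵃ[ℝ] ℝ :=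
  if h : w ∈ W then b.coord ⟨w, h⟩ else 0

variable {b : AffineBasis W ℝ E} {U A : Finset E} {u : E → ℝ} {v w x y : E}

lemma vertexCoord_of_mem (h : w ∈ W) : b.vertexCoord w = b.coord ⟨w, h⟩ := dif_pos h

lemma vertexCoord_of_notMem (h : w ∉ W) : b.vertexCoord w = 0 := dif_neg h

lemma mem_of_vertexCoord_ne_zero (h : b.vertexCoord w x ≠ 0) : w ∈ W := by
  by_contra hw
  simp [vertexCoord_of_notMem hw] at h

lemma sum_vertexCoord (y : E) : ∑ w ∈ W, b.vertexCoord w y = 1 := by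
  rw [← sum_coe_sort, ← b.sum_coord_apply_eq_one y]
  exact sum_congr rfl fun i _ => by rw [vertexCoord_of_mem i.2]

lemma sum_vertexCoord_smul (hb : ⇑b = (↑)) (y : E) :
    ∑ w ∈ W, b.vertexCoord w y • w = y := by
  conv_rhs => rw [← b.linear_combination_coord_eq_self y]
  rw [← sum_coe_sort]
  exact sum_congr rfl fun i _ => by rw [vertexCoord_of_mem i.2, hb]

lemma vertexCoord_eq_of_sum_smul_eq (hb : ⇑b = (↑)) (hUW : U ⊆ W) (hu : ∑ w ∈ U, u w = 1)
    (hy : ∑ w ∈ U, u w • w = y) (w : E) :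
    b.vertexCoord w y = if w ∈ U then u w else 0 := by
  by_cases hw : w ∈ W
  swap
  · rw [vertexCoord_of_notMem hw, if_neg fun h => hw (hUW h)]
    rfl
  have hind : AffineIndependent ℝ ((↑) : W → E) := hb ▸ b.ind
  refine hind.eq_of_sum_eq_sum_subtype (w₁ := fun w => b.vertexCoord w y)
    (w₂ := fun w => if w ∈ U then u w else 0) ?_ ?_ w hw
  · rw [sum_vertexCoord, sum_ite_mem, inter_eq_right.mpr hUW, hu]
  · simp_rw [ite_smul, zero_smul]
    rw [sum_vertexCoord_smul hb, sum_ite_mem, inter_eq_right.mpr hUW, hy]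

lemma mem_convexHull_iff (hb : ⇑b = (↑)) (hUW : U ⊆ W) :
    y ∈ convexHull ℝ (U : Set E) ↔
      (∀ w, 0 ≤ b.vertexCoord w y) ∧ ∀ w ∉ U, b.vertexCoord w y = 0 := by
  constructor
  · rintro hy
    obtain ⟨u, hu0, hu1, huy⟩ := Finset.mem_convexHull'.mp hy
    simp only [vertexCoord_eq_of_sum_smul_eq hb hUW hu1 huy]
    exact ⟨fun w => by split_ifs with h; exacts [hu0 w h, le_rfl], fun w hw => if_neg hw⟩
  · rintro ⟨h0, h1⟩
    refine Finset.mem_convexHull'.mpr ⟨fun w => b.vertexCoord w y, fun w _ => h0 w, ?_, ?_⟩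
    · rw [sum_subset hUW fun w _ hw => h1 w hw, sum_vertexCoord]
    · rw [sum_subset hUW fun w _ hw => by simp only [h1 w hw, zero_smul],
        sum_vertexCoord_smul hb]

lemma mem_convexHull_iff_vertexCoord_nonneg (hb : ⇑b = (↑)) :
    y ∈ convexHull ℝ (W : Set E) ↔ ∀ w, 0 ≤ b.vertexCoord w y := by
  rw [mem_convexHull_iff hb Subset.rfl]
  exact ⟨And.left, fun h => ⟨h, fun w hw => vertexCoord_of_notMem hw ▸ rfl⟩⟩

lemma vertexCoord_apply_of_mem (hb : ⇑b = (↑)) (hw : w ∈ W) (v : E) :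
    b.vertexCoord v w = if v = w then 1 else 0 := by
  simpa using vertexCoord_eq_of_sum_smul_eq hb (singleton_subset_iff.mpr hw)
    (u := fun _ => 1) (by simp) (by simp) v

lemma sum_insert_eq_sum_vertexCoord (hA : A ⊆ W) (hxA : x ∉ A) (g : E → ℝ) :
    ∑ e ∈ insert x A, g e =
      ∑ w ∈ W, (g x * b.vertexCoord w x + if w ∈ A then g w else 0) := by
  rw [sum_insert hxA, sum_add_distrib, ← mul_sum, sum_vertexCoord, mul_one, sum_ite_mem,
    inter_eq_right.mpr hA]

lemma sum_insert_smul_eq_sum_vertexCoord (hb : ⇑b = (↑)) (hA : A ⊆ W) (hxA : x ∉ A)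
    (g : E → ℝ) :
    ∑ e ∈ insert x A, g e • e =
      ∑ w ∈ W, (g x * b.vertexCoord w x + if w ∈ A then g w else 0) • w := by
  simp_rw [add_smul, ite_smul, zero_smul, mul_smul]
  rw [sum_insert hxA, sum_add_distrib, ← smul_sum, sum_vertexCoord_smul hb, sum_ite_mem,
    inter_eq_right.mpr hA]

/-- `t` is the weight of the apex `x`. -/
lemma mem_convexHull_insert_iff (hb : ⇑b = (↑)) (hA : A ⊆ W) (hxA : x ∉ A) :
    y ∈ convexHull ℝ ((insert x A : Finset E) : Set E) ↔
      ∃ t, 0 ≤ t ∧ (∀ w ∈ A, t * b.vertexCoord w x ≤ b.vertexCoord w y) ∧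
        ∀ w ∉ A, b.vertexCoord w y = t * b.vertexCoord w x := by
  constructor
  · intro hy
    obtain ⟨g, hg0, hg1, hgy⟩ := Finset.mem_convexHull'.mp hy
    rw [sum_insert_eq_sum_vertexCoord hA hxA] at hg1
    rw [sum_insert_smul_eq_sum_vertexCoord hb hA hxA] at hgy
    have hy := vertexCoord_eq_of_sum_smul_eq hb Subset.rfl hg1 hgy
    refine ⟨g x, hg0 x (mem_insert_self x A), fun w hw => ?_, fun w hw => ?_⟩
    · simpa [hy, hA hw, hw] using hg0 w (mem_insert_of_mem hw)
    · by_cases hwW : w ∈ W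
      · simp [hy, hwW, hw]
      · simp [vertexCoord_of_notMem hwW]
  · rintro ⟨t, ht0, hle, heq⟩
    set g := Function.update (fun w => b.vertexCoord w y - t * b.vertexCoord w x) x t
    have hgA : ∀ w ∈ A, g w = b.vertexCoord w y - t * b.vertexCoord w x := fun w hw =>
      Function.update_of_ne (ne_of_mem_of_not_mem hw hxA) _ _
    have hgx : g x = t := Function.update_self ..
    have hexpand : ∀ w, (g x * b.vertexCoord w x + if w ∈ A then g w else 0) =
        b.vertexCoord w y := fun w => by
      split_ifs with hw
      · rw [hgA w hw, hgx]; ring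
      · rw [heq w hw, hgx, add_zero]
    refine Finset.mem_convexHull'.mpr ⟨g, fun e he => ?_, ?_, ?_⟩
    · rcases mem_insert.mp he with rfl | he
      · exact hgx ▸ ht0
      · rw [hgA e he]; linarith [hle e he]
    · rw [sum_insert_eq_sum_vertexCoord (b := b) hA hxA, sum_congr rfl fun w _ => hexpand w,
        sum_vertexCoord]
    · rw [sum_insert_smul_eq_sum_vertexCoord hb hA hxA,
        sum_congr rfl fun w _ => congrArg (· • w) (hexpand w), sum_vertexCoord_smul hb]

lemma exists_mul_vertexCoord_le_of_mem_convexHull_insert (hb : ⇑b = (↑)) (hA : A ⊆ W)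
    (hxA : x ∉ A)
    (hy : y ∈ convexHull ℝ ((insert x A : Finset E) : Set E)) :
    ∃ t, 0 ≤ t ∧ (∀ w, t * b.vertexCoord w x ≤ b.vertexCoord w y) ∧
        ∀ w ∉ A, b.vertexCoord w y = t * b.vertexCoord w x := by
  obtain ⟨t, ht0, hle, heq⟩ := (mem_convexHull_insert_iff hb hA hxA).mp hy
  refine ⟨t, ht0, fun w => ?_, heq⟩
  by_cases hw : w ∈ A
  exacts [hle w hw, (heq w hw).ge]

lemma affineIndependent_insert_erase (hb : ⇑b = (↑)) (hv : b.vertexCoord v x ≠ 0) :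
    AffineIndependent ℝ ((↑) : (insert x (W.erase v) : Finset E) → E) := by
  have hxA : x ∉ W.erase v := fun hx => by
    rw [vertexCoord_apply_of_mem hb (mem_of_mem_erase hx), if_neg (ne_of_mem_erase hx).symm] at hv
    exact hv rfl
  by_contra hdep
  obtain ⟨g, hg_smul, hg_sum, e, he, hge⟩ :=
    exists_nontrivial_relation_sum_zero_of_not_affine_ind hdep
  rw [sum_insert_eq_sum_vertexCoord (b := b) (erase_subset v W) hxA] at hg_sum
  rw [sum_insert_smul_eq_sum_vertexCoord hb (erase_subset v W) hxA] at hg_smul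
  have hind : AffineIndependent ℝ ((↑) : W → E) := hb ▸ b.ind
  have hzero := hind.eq_zero_of_sum_eq_zero_subtype hg_sum hg_smul
  -- the `v`-coefficient of the relation rewritten in `W` is `g x * b.vertexCoord v x`
  have hgx : g x = 0 := by
    have := hzero v (mem_of_vertexCoord_ne_zero hv)
    simp only [notMem_erase, if_false, add_zero, mul_eq_zero] at this
    exact this.resolve_right hv
  refine hge ?_
  rcases mem_insert.mp he with rfl | he
  · exact hgx
  · simpa [hgx, he] using hzero e (mem_of_mem_erase he)

lemma exists_mem_convexHull_insert_erase (hb : ⇑b = (↑)) (hxW : x ∉ W)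
    (hx : x ∈ convexHull ℝ (W : Set E)) (hy : y ∈ convexHull ℝ (W : Set E)) :
    ∃ v, 0 < b.vertexCoord v x ∧
      y ∈ convexHull ℝ ((insert x (W.erase v) : Finset E) : Set E) := by
  rw [mem_convexHull_iff_vertexCoord_nonneg hb] at hx hy
  have hsupp : (W.filter fun w => 0 < b.vertexCoord w x).Nonempty := by
    by_contra hempty
    have hle : ∑ w ∈ W, b.vertexCoord w x ≤ 0 := sum_nonpos fun w hw =>
      not_lt.mp fun hpos => hempty ⟨w, mem_filter.mpr ⟨hw, hpos⟩⟩
    linarith [sum_vertexCoord (b := b) x]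
  -- the apex weight is the largest one keeping all coordinates of `y` nonnegative
  obtain ⟨v, hv, hmin⟩ :=
    exists_min_image _ (fun w => b.vertexCoord w y / b.vertexCoord w x) hsupp
  have hvx := (mem_filter.mp hv).2
  refine ⟨v, hvx, (mem_convexHull_insert_iff hb (erase_subset v W) fun h => hxW
    (mem_of_mem_erase h)).mpr ⟨_, div_nonneg (hy v) hvx.le, fun w hw => ?_, fun w hw => ?_⟩⟩
  · rcases (hx w).lt_or_eq with hwx | hwx
    · exact (le_div_iff₀ hwx).mp (hmin w (mem_filter.mpr ⟨mem_of_mem_erase hw, hwx⟩))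
    · rw [← hwx, mul_zero]; exact hy w
  · by_cases hwv : w = v
    · rw [hwv, div_mul_cancel₀ _ hvx.ne']
    · have hwW : w ∉ W := fun h => hw (mem_erase.mpr ⟨hwv, h⟩)
      simp [vertexCoord_of_notMem hwW]

lemma convexHull_insert_erase_inter_of_mem (hb : ⇑b = (↑)) (hUW : U ⊆ W) (hxW : x ∉ W)
    (hxU : x ∈ convexHull ℝ (U : Set E)) (v : E) :
    convexHull ℝ ((insert x (W.erase v) : Finset E) : Set E) ∩ convexHull ℝ (U : Set E) =
      convexHull ℝ ((insert x (U.erase v) : Finset E) : Set E) := by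
  refine subset_antisymm ?_ (Set.subset_inter
    (convexHull_mono (coe_subset.mpr (insert_subset_insert x (erase_subset_erase v hUW))))
    (convexHull_insert_subset (erase_subset v U) hxU))
  rintro y ⟨hyN, hyU⟩
  obtain ⟨t, ht0, hle, heq⟩ := (mem_convexHull_insert_iff hb (erase_subset v W)
    fun h => hxW (mem_of_mem_erase h)).mp hyN
  have hx0 := ((mem_convexHull_iff hb hUW).mp hxU).2
  have hy0 := ((mem_convexHull_iff hb hUW).mp hyU).2
  refine (mem_convexHull_insert_iff hb ((erase_subset v U).trans hUW)
    fun h => hxW (hUW (mem_of_mem_erase h))).mpr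
    ⟨t, ht0, fun w hw => hle w (erase_subset_erase v hUW hw), fun w hw => ?_⟩
  by_cases hwU : w ∈ U
  · exact heq w fun h => hw (mem_erase.mpr ⟨ne_of_mem_erase h, hwU⟩)
  · rw [hy0 w hwU, hx0 w hwU, mul_zero]

lemma convexHull_insert_erase_inter_of_notMem (hb : ⇑b = (↑)) (hUW : U ⊆ W) (hxW : x ∉ W)
    (hx : x ∈ convexHull ℝ (W : Set E)) (hxU : x ∉ convexHull ℝ (U : Set E)) (v : E) :
    convexHull ℝ ((insert x (W.erase v) : Finset E) : Set E) ∩ convexHull ℝ (U : Set E) =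
      convexHull ℝ ((U.erase v : Finset E) : Set E) := by
  refine subset_antisymm ?_ (Set.subset_inter
    (convexHull_mono (coe_subset.mpr ((erase_subset_erase v hUW).trans (subset_insert x _))))
    (convexHull_mono (coe_subset.mpr (erase_subset v U))))
  rintro y ⟨hyN, hyU⟩
  obtain ⟨t, ht0, hle, heq⟩ := exists_mul_vertexCoord_le_of_mem_convexHull_insert hb
    (erase_subset v W) (fun h => hxW (mem_of_mem_erase h)) hyN
  rw [mem_convexHull_iff hb hUW] at hyU
  -- `x` has a positive coordinate off `U`, where `y` has none, so the apex weight `t` vanishes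
  obtain ⟨w, hwU, hwx⟩ : ∃ w ∉ U, 0 < b.vertexCoord w x := by
    by_contra! hcon
    exact hxU ((mem_convexHull_iff hb hUW).mpr ⟨(mem_convexHull_iff_vertexCoord_nonneg hb).mp hx,
      fun w hw => le_antisymm (hcon w hw) ((mem_convexHull_iff_vertexCoord_nonneg hb).mp hx w)⟩)
  have ht : t = 0 := by nlinarith [hle w, hyU.2 w hwU]
  refine (mem_convexHull_iff hb ((erase_subset v U).trans hUW)).mpr ⟨hyU.1, fun w hw => ?_⟩
  by_cases hwv : w = v
  · rw [heq w (hwv ▸ notMem_erase v W), ht, zero_mul]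
  · exact hyU.2 w fun h => hw (mem_erase.mpr ⟨hwv, h⟩)

/-- A common point has the same apex weight in both cones. -/
lemma convexHull_insert_erase_inter_insert_erase (hb : ⇑b = (↑)) (hUW : U ⊆ W) (hxU : x ∉ U)
    {v' : E} (hv : 0 < b.vertexCoord v x) (hv' : 0 < b.vertexCoord v' x) :
    convexHull ℝ ((insert x (U.erase v) : Finset E) : Set E) ∩
        convexHull ℝ ((insert x (U.erase v') : Finset E) : Set E) =
      convexHull ℝ ((insert x ((U.erase v).erase v') : Finset E) : Set E) := by
  refine subset_antisymm ?_ (Set.subset_inter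
    (convexHull_mono (coe_subset.mpr (insert_subset_insert x (erase_subset _ _))))
    (convexHull_mono (coe_subset.mpr (insert_subset_insert x ?_))))
  · rintro y ⟨hy, hy'⟩
    have hxA : ∀ {A}, A ⊆ U → x ∉ A := fun hA h => hxU (hA h)
    obtain ⟨t, ht0, hle, heq⟩ := exists_mul_vertexCoord_le_of_mem_convexHull_insert hb
      ((erase_subset v U).trans hUW) (hxA (erase_subset v U)) hy
    obtain ⟨t', -, hle', heq'⟩ := exists_mul_vertexCoord_le_of_mem_convexHull_insert hb
      ((erase_subset v' U).trans hUW) (hxA (erase_subset v' U)) hy'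
    have htt' : t = t' := le_antisymm
      (le_of_mul_le_mul_right ((heq' v' (notMem_erase v' U)) ▸ hle v') hv')
      (le_of_mul_le_mul_right ((heq v (notMem_erase v U)) ▸ hle' v) hv)
    refine (mem_convexHull_insert_iff hb ((erase_subset _ _).trans ((erase_subset v U).trans hUW))
      (hxA ((erase_subset _ _).trans (erase_subset v U)))).mpr
      ⟨t, ht0, fun w hw => hle w, fun w hw => ?_⟩
    by_cases hwv' : w = v'
    · rw [hwv', heq' v' (notMem_erase v' U), htt']
    · exact heq w fun h => hw (mem_erase.mpr ⟨hwv', h⟩)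
  · rw [erase_right_comm]
    exact erase_subset _ _

lemma mem_convexHull_of_sum_vertexCoord_nonpos (hb : ⇑b = (↑)) {F : Finset E} (hFW : F ⊆ W)
    (hy : y ∈ convexHull ℝ (W : Set E)) (h : ∑ w ∈ W \ F, b.vertexCoord w y ≤ 0) :
    y ∈ convexHull ℝ (F : Set E) := by
  rw [mem_convexHull_iff_vertexCoord_nonneg hb] at hy
  have hzero := (sum_eq_zero_iff_of_nonneg fun w _ => hy w).mp
    (le_antisymm h (sum_nonneg fun w _ => hy w))
  refine (mem_convexHull_iff hb hFW).mpr ⟨hy, fun w hwF => ?_⟩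
  by_cases hwW : w ∈ W
  · exact hzero w (mem_sdiff.mpr ⟨hwW, hwF⟩)
  · simp [vertexCoord_of_notMem hwW]

lemma mem_vectorSpan_of_sum_linear_vertexCoord_nonpos (hb : ⇑b = (↑)) {F : Finset E}
    (hFW : F ⊆ W) (hx : x ∈ convexHull ℝ (F : Set E)) {m : E}
    (hxm : x + m ∈ convexHull ℝ (W : Set E))
    (hm : (∑ w ∈ W \ F, (b.vertexCoord w).linear) m ≤ 0) :
    m ∈ vectorSpan ℝ (F : Set E) := by
  have hx0 := ((mem_convexHull_iff hb hFW).mp hx).2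
  have hxmF : x + m ∈ convexHull ℝ (F : Set E) :=
    mem_convexHull_of_sum_vertexCoord_nonpos hb hFW hxm <| by
      rw [LinearMap.sum_apply] at hm
      refine le_of_eq_of_le (sum_congr rfl fun w hw => ?_) hm
      rw [add_comm, ← vadd_eq_add, AffineMap.map_vadd, hx0 w (mem_sdiff.mp hw).2, vadd_eq_add,
        add_zero]
  rw [← direction_affineSpan]
  simpa using AffineSubspace.vsub_mem_direction (convexHull_subset_affineSpan _ hxmF)
    (convexHull_subset_affineSpan _ hx)

end AffineBasis

section Star

variable {E : Type*} [AddCommGroup E] [Module ℝ E]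

open Classical in
noncomputable def starAt (Γ : Finset (Finset E)) (x : E) : Finset (Finset E) :=
  Γ.filter fun W => x ∈ convexHull ℝ (W : Set E)

lemma mem_starAt {Γ : Finset (Finset E)} {x : E} {W : Finset E} :
    W ∈ starAt Γ x ↔ W ∈ Γ ∧ x ∈ convexHull ℝ (W : Set E) := by
  simp [starAt]

lemma starAt_subset (Γ : Finset (Finset E)) (x : E) : starAt Γ x ⊆ Γ :=
  fun _ hW => (mem_starAt.mp hW).1

end Star

section Topology

variable {E : Type*} [NormedAddCommGroup E] [NormedSpace ℝ E]

lemma exists_pos_add_smul_mem {s : Set E} {x : E} (hs : s ∈ 𝓝 x) (m : E) :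
    ∃ t : ℝ, 0 < t ∧ x + t • m ∈ s := by
  have : Tendsto (fun t : ℝ => x + t • m) (𝓝[>] 0) (𝓝 x) :=
    tendsto_nhdsWithin_of_tendsto_nhds
      (by simpa using (by fun_prop : Continuous fun t : ℝ => x + t • m).tendsto 0)
  obtain ⟨t, hts, ht⟩ := ((this.eventually hs).and self_mem_nhdsWithin).exists
  exact ⟨t, ht, hts⟩

variable [DecidableEq E]

lemma biUnion_starAt_mem_nhds {Γ : Finset (Finset E)} {x : E}
    (hx : x ∈ interior (⋃ W ∈ Γ, convexHull ℝ (W : Set E))) :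
    (⋃ W ∈ starAt Γ x, convexHull ℝ (W : Set E)) ∈ 𝓝 x := by
  have hclosed : IsClosed (⋃ W ∈ Γ \ starAt Γ x, convexHull ℝ (W : Set E)) :=
    isClosed_biUnion_finset fun W _ => (W.finite_toSet.isCompact_convexHull (𝕜 := ℝ)).isClosed
  have hxK : x ∉ ⋃ W ∈ Γ \ starAt Γ x, convexHull ℝ (W : Set E) := by
    simp +contextual [mem_starAt]
  filter_upwards [mem_interior_iff_mem_nhds.mp hx, hclosed.isOpen_compl.mem_nhds hxK]
    with y hy hyK
  obtain ⟨W, hW, hyW⟩ := Set.mem_iUnion₂.mp hy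
  by_cases hWx : W ∈ starAt Γ x
  · exact Set.mem_biUnion hWx hyW
  · exact absurd (Set.mem_biUnion (mem_sdiff.mpr ⟨hW, hWx⟩) hyW) hyK

/-- A point in the relative interior of a face `F` whose star is a neighbourhood lies in at least
`dim E + 2 - |F|` simplices: otherwise some direction transversal to `F` would point into none of
them. -/
theorem finrank_add_two_le_card_add_card [FiniteDimensional ℝ E] {Γ₀ : Finset (Finset E)}
    {F : Finset E} {x : E} (hΓ₀ : Γ₀.Nonempty)
    (hsimplex : ∀ W ∈ Γ₀,
      F ⊆ W ∧ AffineIndependent ℝ ((↑) : W → E) ∧ W.card = finrank ℝ E + 1)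
    (hxF : x ∈ convexHull ℝ (F : Set E))
    (hnhds : (⋃ W ∈ Γ₀, convexHull ℝ (W : Set E)) ∈ 𝓝 x) :
    finrank ℝ E + 2 ≤ Γ₀.card + F.card := by
  by_contra! hlt
  choose b hb using fun W (hW : W ∈ Γ₀) =>
    exists_affineBasis_coe (hsimplex W hW).2.1 (hsimplex W hW).2.2
  obtain ⟨W₁, hW₁⟩ := hΓ₀
  have : Nonempty Γ₀ := ⟨⟨W₁, hW₁⟩⟩
  have hF : AffineIndependent ℝ ((↑) : F → E) :=
    (hsimplex W₁ hW₁).2.1.mono (coe_subset.mpr (hsimplex W₁ hW₁).1)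
  have : Nonempty F := (coe_nonempty.mp (convexHull_nonempty_iff.mp ⟨x, hxF⟩)).to_subtype
  have hL : finrank ℝ (vectorSpan ℝ (F : Set E)) + 1 = F.card := by
    have hrange : Set.range ((↑) : F → E) = F := Subtype.range_coe_subtype
    rw [← (LinearEquiv.ofEq _ _ (congrArg (vectorSpan ℝ) hrange)).finrank_eq,
      hF.finrank_vectorSpan_add_one, Fintype.card_coe]
  let φ : Γ₀ → E →ₗ[ℝ] ℝ := fun W =>
    ∑ w ∈ W.1 \ F, ((b W.1 W.2).vertexCoord w).linear
  obtain ⟨m, hmL, hm⟩ := (vectorSpan ℝ (F : Set E)).exists_notMem_forall_apply_nonpos φ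
    (by rw [Fintype.card_coe]; omega)
  obtain ⟨t, ht, hy⟩ := exists_pos_add_smul_mem hnhds m
  obtain ⟨W, hW, hyW⟩ := Set.mem_iUnion₂.mp hy
  have hmem := (b W hW).mem_vectorSpan_of_sum_linear_vertexCoord_nonpos (hb W hW)
    (hsimplex W hW).1 hxF hyW <| by
      rw [map_smul, smul_eq_mul]
      exact mul_nonpos_of_nonneg_of_nonpos ht.le (hm ⟨W, hW⟩)
  exact hmL ((Submodule.smul_mem_iff _ ht.ne').mp hmem)

end Topology

section Stellar

variable {E : Type*} [AddCommGroup E] [Module ℝ E] {Γ : Finset (Finset E)} {F W : Finset E}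
  {u : E → ℝ} {v x : E}

/-- `x` lies in the relative interior of the face `F`, with barycentric weights `u`, and every
simplex of `Γ` whose hull contains `x` has `F` as a face. -/
structure IsCarrier (Γ : Finset (Finset E)) (x : E) (F : Finset E) (u : E → ℝ) : Prop where
  notMem : ∀ W ∈ Γ, x ∉ W
  subset : ∀ W ∈ starAt Γ x, F ⊆ W
  pos : ∀ w ∈ F, 0 < u w
  sum_eq_one : ∑ w ∈ F, u w = 1
  sum_smul_eq : ∑ w ∈ F, u w • w = x

lemma IsCarrier.mem_convexHull (hc : IsCarrier Γ x F u) : x ∈ convexHull ℝ (F : Set E) :=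
  Finset.mem_convexHull'.mpr ⟨u, fun w hw => (hc.pos w hw).le, hc.sum_eq_one, hc.sum_smul_eq⟩

lemma IsCarrier.two_le_card (hc : IsCarrier Γ x F u) (hne : (starAt Γ x).Nonempty) :
    2 ≤ F.card := by
  obtain ⟨W, hW⟩ := hne
  have hFne : F.Nonempty := nonempty_of_sum_ne_zero (hc.sum_eq_one ▸ one_ne_zero)
  by_contra! hlt
  obtain ⟨f, rfl⟩ := card_eq_one.mp (show F.card = 1 by have := hFne.card_pos; omega)
  have hu := hc.sum_eq_one
  have hx := hc.sum_smul_eq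
  rw [sum_singleton] at hu hx
  rw [hu, one_smul] at hx
  exact hc.notMem W (mem_starAt.mp hW).1 (hx ▸ hc.subset W hW (mem_singleton_self f))

variable [DecidableEq E]

noncomputable def stellarSubdivision (Γ : Finset (Finset E)) (F : Finset E) (x : E) :
    Finset (Finset E) :=
  Γ \ starAt Γ x ∪ (starAt Γ x ×ˢ F).image fun p => insert x (p.1.erase p.2)

lemma mem_stellarSubdivision {N : Finset E} :
    N ∈ stellarSubdivision Γ F x ↔
      (N ∈ Γ ∧ N ∉ starAt Γ x) ∨
        ∃ W ∈ starAt Γ x, ∃ v ∈ F, insert x (W.erase v) = N := by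
  simp [stellarSubdivision, and_assoc]

namespace IsCarrier

lemma vertexCoord_eq (hc : IsCarrier Γ x F u) (hW : W ∈ starAt Γ x) {b : AffineBasis W ℝ E}
    (hb : ⇑b = (↑)) (w : E) :
    b.vertexCoord w x = if w ∈ F then u w else 0 :=
  b.vertexCoord_eq_of_sum_smul_eq hb (hc.subset W hW) hc.sum_eq_one hc.sum_smul_eq w

lemma vertexCoord_pos (hc : IsCarrier Γ x F u) (hW : W ∈ starAt Γ x) {b : AffineBasis W ℝ E}
    (hb : ⇑b = (↑)) (hv : v ∈ F) : 0 < b.vertexCoord v x := by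
  rw [hc.vertexCoord_eq hW hb, if_pos hv]
  exact hc.pos v hv

lemma mem_of_vertexCoord_pos (hc : IsCarrier Γ x F u) (hW : W ∈ starAt Γ x)
    {b : AffineBasis W ℝ E} (hb : ⇑b = (↑)) (hv : 0 < b.vertexCoord v x) : v ∈ F := by
  by_contra hvF
  rw [hc.vertexCoord_eq hW hb, if_neg hvF] at hv
  exact hv.false

lemma injOn_insert_erase (hc : IsCarrier Γ x F u) :
    Set.InjOn (fun p : Finset E × E => insert x (p.1.erase p.2)) ↑(starAt Γ x ×ˢ F) := by
  rintro ⟨W, v⟩ hWv ⟨W', v'⟩ hWv' heq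
  simp only [coe_product, Set.mem_prod, mem_coe] at hWv hWv' heq
  have hxA : ∀ {A}, A ∈ starAt Γ x → ∀ w, x ∉ A.erase w := fun hA w h =>
    hc.notMem _ (mem_starAt.mp hA).1 (mem_of_mem_erase h)
  have herase : W.erase v = W'.erase v' := by
    simpa [erase_insert (hxA hWv.1 v), erase_insert (hxA hWv'.1 v')] using congrArg (·.erase x) heq
  have hvW' := hc.subset W' hWv'.1 hWv.2
  obtain rfl : v = v' := by
    by_contra hne
    exact notMem_erase v W (herase ▸ mem_erase.mpr ⟨hne, hvW'⟩)
  rw [← insert_erase (hc.subset W hWv.1 hWv.2), herase, insert_erase hvW']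

lemma card_stellarSubdivision (hc : IsCarrier Γ x F u) :
    (stellarSubdivision Γ F x).card = (Γ \ starAt Γ x).card + (starAt Γ x).card * F.card := by
  rw [stellarSubdivision, card_union_of_disjoint, card_image_of_injOn hc.injOn_insert_erase,
    card_product]
  refine disjoint_left.mpr fun N hN hN' => ?_
  obtain ⟨⟨W, v⟩, -, rfl⟩ := mem_image.mp hN'
  exact hc.notMem _ (mem_sdiff.mp hN).1 (mem_insert_self _ _)

end IsCarrier

end Stellar

namespace IsTriangulation

variable {d : ℕ} {P V : Set (Fin d → ℝ)} {Γ : Finset (Finset (Fin d → ℝ))}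
  {F W : Finset (Fin d → ℝ)} {u : (Fin d → ℝ) → ℝ} {x : Fin d → ℝ}

lemma exists_affineBasis (hΓ : IsTriangulation d P V Γ) (hW : W ∈ Γ) :
    ∃ b : AffineBasis W ℝ (Fin d → ℝ), ⇑b = (↑) :=
  exists_affineBasis_coe (hΓ.1 W hW).2.1 (by rw [(hΓ.1 W hW).1, finrank_fin_fun])

lemma starAt_nonempty (hΓ : IsTriangulation d P V Γ) (hxP : x ∈ P) :
    (starAt Γ x).Nonempty := by
  rw [hΓ.2.2.2] at hxP
  obtain ⟨W, hW, hxW⟩ := Set.mem_iUnion₂.mp hxP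
  exact ⟨W, mem_starAt.mpr ⟨hW, hxW⟩⟩

/-- The carrier is read off from the coordinates of `x` in any simplex containing it; it is a face
of every other such simplex because two simplices meet in a common face. -/
lemma exists_isCarrier (hΓ : IsTriangulation d P V Γ) (hxP : x ∈ P) (hxV : x ∉ V) :
    ∃ F u, IsCarrier Γ x F u := by
  obtain ⟨W₀, hW₀⟩ := hΓ.starAt_nonempty hxP
  obtain ⟨hW₀Γ, hxW₀⟩ := mem_starAt.mp hW₀
  obtain ⟨b, hb⟩ := hΓ.exists_affineBasis hW₀Γ
  have hx0 := (b.mem_convexHull_iff_vertexCoord_nonneg hb).mp hxW₀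
  have hsupp : ∀ w ∈ W₀, b.vertexCoord w x ≠ 0 → 0 < b.vertexCoord w x :=
    fun w _ hw => (hx0 w).lt_of_ne' hw
  refine ⟨W₀.filter (0 < b.vertexCoord · x), (b.vertexCoord · x), ⟨?_, ?_, ?_, ?_, ?_⟩⟩
  · exact fun W hW hxW => hxV ((hΓ.1 W hW).2.2 hxW)
  · intro W hW w hw
    obtain ⟨hWΓ, hxW⟩ := mem_starAt.mp hW
    obtain ⟨U, hUW₀, hUW, hI⟩ := hΓ.2.2.1 W₀ hW₀Γ W hWΓ
    have hxU : x ∈ convexHull ℝ (U : Set (Fin d → ℝ)) := hI ▸ ⟨hxW₀, hxW⟩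
    replace hxU := ((b.mem_convexHull_iff hb hUW₀).mp hxU).2
    exact hUW (by_contra fun h => (mem_filter.mp hw).2.ne' (hxU w h))
  · exact fun w hw => (mem_filter.mp hw).2
  · rw [sum_filter_of_ne hsupp, b.sum_vertexCoord]
  · rw [sum_filter_of_ne fun w hw h => hsupp w hw (left_ne_zero_of_smul h),
      b.sum_vertexCoord_smul hb]

lemma stellarSubdivision_simplex (hΓ : IsTriangulation d P V Γ) (hc : IsCarrier Γ x F u) :
    ∀ N ∈ stellarSubdivision Γ F x, N.card = d + 1 ∧
      AffineIndependent ℝ (fun y : (N : Set (Fin d → ℝ)) => (y : Fin d → ℝ)) ∧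
      (N : Set (Fin d → ℝ)) ⊆ V ∪ {x} := by
  intro N hN
  rcases mem_stellarSubdivision.mp hN with ⟨hN, -⟩ | ⟨W, hW, v, hv, rfl⟩
  · obtain ⟨hcard, hind, hV⟩ := hΓ.1 N hN
    exact ⟨hcard, hind, hV.trans Set.subset_union_left⟩
  obtain ⟨hWΓ, -⟩ := mem_starAt.mp hW
  obtain ⟨hcard, -, hV⟩ := hΓ.1 W hWΓ
  obtain ⟨b, hb⟩ := hΓ.exists_affineBasis hWΓ
  refine ⟨?_, b.affineIndependent_insert_erase hb (hc.vertexCoord_pos hW hb hv).ne', ?_⟩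
  · rw [card_insert_of_notMem fun h => hc.notMem W hWΓ (mem_of_mem_erase h),
      card_erase_of_mem (hc.subset W hW hv), hcard, Nat.add_sub_cancel]
  · intro y hy
    rcases mem_insert.mp hy with rfl | hy
    · exact Or.inr rfl
    · exact Or.inl (hV (mem_of_mem_erase hy))

lemma stellarSubdivision_vertex (hΓ : IsTriangulation d P V Γ) (hc : IsCarrier Γ x F u)
    (hxP : x ∈ P) : ∀ y ∈ V ∪ {x}, ∃ N ∈ stellarSubdivision Γ F x, y ∈ N := by
  have hF := hc.two_le_card (hΓ.starAt_nonempty hxP)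
  rintro y (hy | rfl)
  · obtain ⟨W, hW, hyW⟩ := hΓ.2.1 y hy
    by_cases hWx : W ∈ starAt Γ x
    · obtain ⟨v, hv, hvy⟩ := exists_mem_ne hF y
      exact ⟨_, mem_stellarSubdivision.mpr (Or.inr ⟨W, hWx, v, hv, rfl⟩),
        mem_insert_of_mem (mem_erase.mpr ⟨hvy.symm, hyW⟩)⟩
    · exact ⟨W, mem_stellarSubdivision.mpr (Or.inl ⟨hW, hWx⟩), hyW⟩
  · obtain ⟨W, hW⟩ := hΓ.starAt_nonempty hxP
    obtain ⟨v, hv⟩ := card_pos.mp (by omega : 0 < F.card)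
    exact ⟨_, mem_stellarSubdivision.mpr (Or.inr ⟨W, hW, v, hv, rfl⟩), mem_insert_self _ _⟩

lemma inter_insert_erase_of_notMem_starAt (hΓ : IsTriangulation d P V Γ)
    (hc : IsCarrier Γ x F u) {A : Finset (Fin d → ℝ)} (hA : A ∈ Γ) (hAx : A ∉ starAt Γ x)
    (hW : W ∈ starAt Γ x) (v : Fin d → ℝ) :
    ∃ U, U ⊆ A ∧ U ⊆ insert x (W.erase v) ∧
      convexHull ℝ (A : Set (Fin d → ℝ)) ∩
          convexHull ℝ ((insert x (W.erase v) : Finset (Fin d → ℝ)) : Set (Fin d → ℝ)) =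
        convexHull ℝ (U : Set (Fin d → ℝ)) := by
  obtain ⟨hWΓ, hxW⟩ := mem_starAt.mp hW
  obtain ⟨U, hUA, hUW, hI⟩ := hΓ.2.2.1 A hA W hWΓ
  obtain ⟨b, hb⟩ := hΓ.exists_affineBasis hWΓ
  have hxU : x ∉ convexHull ℝ (U : Set (Fin d → ℝ)) := fun h =>
    hAx (mem_starAt.mpr ⟨hA, (hI ▸ h).1⟩)
  refine ⟨U.erase v, (erase_subset v U).trans hUA,
    (erase_subset_erase v hUW).trans (subset_insert x _), ?_⟩
  rw [← Set.inter_eq_left.mpr (convexHull_insert_subset (erase_subset v W) hxW),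
    Set.inter_left_comm, hI]
  exact b.convexHull_insert_erase_inter_of_notMem hb hUW (hc.notMem W hWΓ) hxW hxU v

lemma inter_insert_erase_insert_erase (hΓ : IsTriangulation d P V Γ) (hc : IsCarrier Γ x F u)
    {W' : Finset (Fin d → ℝ)} (hW : W ∈ starAt Γ x) (hW' : W' ∈ starAt Γ x)
    {v v' : Fin d → ℝ} (hv : v ∈ F) (hv' : v' ∈ F) :
    ∃ U, U ⊆ insert x (W.erase v) ∧ U ⊆ insert x (W'.erase v') ∧
      convexHull ℝ ((insert x (W.erase v) : Finset (Fin d → ℝ)) : Set (Fin d → ℝ)) ∩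
          convexHull ℝ ((insert x (W'.erase v') : Finset (Fin d → ℝ)) : Set (Fin d → ℝ)) =
        convexHull ℝ (U : Set (Fin d → ℝ)) := by
  obtain ⟨hWΓ, hxW⟩ := mem_starAt.mp hW
  obtain ⟨hW'Γ, hxW'⟩ := mem_starAt.mp hW'
  obtain ⟨U, hUW, hUW', hI⟩ := hΓ.2.2.1 W hWΓ W' hW'Γ
  obtain ⟨b, hb⟩ := hΓ.exists_affineBasis hWΓ
  obtain ⟨b', hb'⟩ := hΓ.exists_affineBasis hW'Γ
  have hxU : x ∈ convexHull ℝ (U : Set (Fin d → ℝ)) := hI ▸ ⟨hxW, hxW'⟩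
  refine ⟨insert x ((U.erase v).erase v'),
    insert_subset_insert x ((erase_subset _ _).trans (erase_subset_erase v hUW)),
    insert_subset_insert x ?_, ?_⟩
  · rw [erase_right_comm]
    exact (erase_subset _ _).trans (erase_subset_erase v' hUW')
  have hNN' := Set.inter_subset_inter (convexHull_insert_subset (erase_subset v W) hxW)
    (convexHull_insert_subset (erase_subset v' W') hxW')
  rw [hI] at hNN'
  rw [← Set.inter_eq_left.mpr hNN', Set.inter_inter_distrib_right,
    b.convexHull_insert_erase_inter_of_mem hb hUW (hc.notMem W hWΓ) hxU,
    b'.convexHull_insert_erase_inter_of_mem hb' hUW' (hc.notMem W' hW'Γ) hxU]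
  exact b.convexHull_insert_erase_inter_insert_erase hb hUW (fun h => hc.notMem W hWΓ (hUW h))
    (hc.vertexCoord_pos hW hb hv) (hc.vertexCoord_pos hW hb hv')

lemma stellarSubdivision_inter (hΓ : IsTriangulation d P V Γ) (hc : IsCarrier Γ x F u) :
    ∀ N ∈ stellarSubdivision Γ F x, ∀ N' ∈ stellarSubdivision Γ F x,
      ∃ U : Finset (Fin d → ℝ), U ⊆ N ∧ U ⊆ N' ∧
        convexHull ℝ (N : Set (Fin d → ℝ)) ∩ convexHull ℝ (N' : Set (Fin d → ℝ)) =
          convexHull ℝ (U : Set (Fin d → ℝ)) := by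
  intro N hN N' hN'
  rcases mem_stellarSubdivision.mp hN with ⟨hN, hNx⟩ | ⟨W, hW, v, hv, rfl⟩ <;>
    rcases mem_stellarSubdivision.mp hN' with ⟨hN', hN'x⟩ | ⟨W', hW', v', hv', rfl⟩
  · exact hΓ.2.2.1 N hN N' hN'
  · exact hΓ.inter_insert_erase_of_notMem_starAt hc hN hNx hW' v'
  · obtain ⟨U, hUN', hUN, hI⟩ := hΓ.inter_insert_erase_of_notMem_starAt hc hN' hN'x hW v
    exact ⟨U, hUN, hUN', by rw [Set.inter_comm, hI]⟩
  · exact hΓ.inter_insert_erase_insert_erase hc hW hW' hv hv'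

lemma stellarSubdivision_cover (hΓ : IsTriangulation d P V Γ) (hc : IsCarrier Γ x F u) :
    P = ⋃ N ∈ stellarSubdivision Γ F x, convexHull ℝ (N : Set (Fin d → ℝ)) := by
  rw [hΓ.2.2.2]
  refine subset_antisymm (Set.iUnion₂_subset fun W hW y hy => ?_)
    (Set.iUnion₂_subset fun N hN => ?_)
  · by_cases hWx : W ∈ starAt Γ x
    · obtain ⟨b, hb⟩ := hΓ.exists_affineBasis hW
      obtain ⟨v, hv, hyN⟩ := b.exists_mem_convexHull_insert_erase hb (hc.notMem W hW)
        (mem_starAt.mp hWx).2 hy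
      exact Set.mem_biUnion (mem_stellarSubdivision.mpr
        (Or.inr ⟨W, hWx, v, hc.mem_of_vertexCoord_pos hWx hb hv, rfl⟩)) hyN
    · exact Set.mem_biUnion (mem_stellarSubdivision.mpr (Or.inl ⟨hW, hWx⟩)) hy
  · rcases mem_stellarSubdivision.mp hN with ⟨hN, -⟩ | ⟨W, hW, v, -, rfl⟩
    · exact Set.subset_iUnion₂_of_subset N hN subset_rfl
    · exact (convexHull_insert_subset (erase_subset v W) (mem_starAt.mp hW).2).trans
        (Set.subset_iUnion₂_of_subset W (mem_starAt.mp hW).1 subset_rfl)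

theorem stellarSubdivision (hΓ : IsTriangulation d P V Γ) (hc : IsCarrier Γ x F u)
    (hxP : x ∈ P) : IsTriangulation d P (V ∪ {x}) (stellarSubdivision Γ F x) :=
  ⟨hΓ.stellarSubdivision_simplex hc, hΓ.stellarSubdivision_vertex hc hxP,
    hΓ.stellarSubdivision_inter hc, hΓ.stellarSubdivision_cover hc⟩

lemma add_two_le_card_starAt_add_card (hΓ : IsTriangulation d P V Γ) (hc : IsCarrier Γ x F u)
    (hx : x ∈ interior P) : d + 2 ≤ (starAt Γ x).card + F.card := by
  have := finrank_add_two_le_card_add_card (hΓ.starAt_nonempty (interior_subset hx))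
    (fun W hW => ⟨hc.subset W hW, (hΓ.1 W (mem_starAt.mp hW).1).2.1,
      by rw [finrank_fin_fun]; exact (hΓ.1 W (mem_starAt.mp hW).1).1⟩)
    hc.mem_convexHull (biUnion_starAt_mem_nhds (hΓ.2.2.2 ▸ hx))
  rwa [finrank_fin_fun] at this

end IsTriangulation

theorem exists_triangulation_insert_interior_point_general
    (d : ℕ)
    (P : Set (Fin d → ℝ))
    (V : Finset (Fin d → ℝ))
    (Γ : Finset (Finset (Fin d → ℝ)))
    (hΓ : IsTriangulation d P (V : Set (Fin d → ℝ)) Γ)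
    (x : Fin d → ℝ) (hx : x ∈ interior P) (hxV : x ∉ V) :
    ∃ Γ' : Finset (Finset (Fin d → ℝ)),
      IsTriangulation d P ((V : Set (Fin d → ℝ)) ∪ {x}) Γ' ∧
      Γ.card + d ≤ Γ'.card := by
  have hxP := interior_subset hx
  obtain ⟨F, u, hc⟩ := hΓ.exists_isCarrier hxP hxV
  refine ⟨stellarSubdivision Γ F x, hΓ.stellarSubdivision hc hxP, ?_⟩
  have hstar := (hΓ.starAt_nonempty hxP).card_pos
  have hF := hc.two_le_card (hΓ.starAt_nonempty hxP)
  have hbound := hΓ.add_two_le_card_starAt_add_card hc hx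
  have hsplit := card_sdiff_add_card_eq_card (starAt_subset Γ x)
  rw [hc.card_stellarSubdivision]
  nlinarith

/-- Let `P ⊂ ℝ^d` be a convex polytope of dimension `d`, `V ⊆ P` a finite set
containing every vertex (extreme point) of `P`, `Γ` a triangulation of `P` on `V`,
and `x` a point of the interior of `P` with `x ∉ V`.  Then there exists a
triangulation `Γ'` of `P` on `V ∪ {x}` with `|Γ'| ≥ |Γ| + d`. -/
theorem exists_triangulation_insert_interior_point
    (d : ℕ) (S : Finset (Fin d → ℝ))
    (P : Set (Fin d → ℝ)) (hP : P = convexHull ℝ (S : Set (Fin d → ℝ)))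
    (hdim : affineSpan ℝ (S : Set (Fin d → ℝ)) = ⊤)
    (V : Finset (Fin d → ℝ)) (hVP : (V : Set (Fin d → ℝ)) ⊆ P)
    (hvert : Set.extremePoints ℝ P ⊆ (V : Set (Fin d → ℝ)))
    (Γ : Finset (Finset (Fin d → ℝ)))
    (hΓ : IsTriangulation d P (V : Set (Fin d → ℝ)) Γ)
    (x : Fin d → ℝ) (hx : x ∈ interior P) (hxV : x ∉ V) :
    ∃ Γ' : Finset (Finset (Fin d → ℝ)),
      IsTriangulation d P ((V : Set (Fin d → ℝ)) ∪ {x}) Γ' ∧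
      Γ.card + d ≤ Γ'.card :=
  exists_triangulation_insert_interior_point_general d P V Γ hΓ x hx hxV
end

section
/- Let P ⊂ ℝ^d be a convex polytope of dimension d, V ⊂ P a finite set containing every vertex of P, and Γ a triangulation of P on V. Let F₀ be a face of dimension e (with 1 ≤ e ≤ d) of some simplex of Γ such that F₀ is not contained in the boundary ∂P of P. Then the number q of d-simplices G ∈ Γ having F₀ as a face satisfies q ≥ d − e + 1. -/
open Finset Module Filter Topology

section Cones

variable {𝕜 Q : Type*} [Field 𝕜] [LinearOrder 𝕜] [IsStrictOrderedRing 𝕜]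
  [AddCommGroup Q] [Module 𝕜 Q] [FiniteDimensional 𝕜 Q]

theorem exists_ne_zero_forall_apply_nonpos_s6 {ι : Type*} [Fintype ι] [Nonempty ι]
    (f : ι → Q →ₗ[𝕜] 𝕜) (hcard : Fintype.card ι ≤ finrank 𝕜 Q) :
    ∃ v ≠ 0, ∀ i, f i v ≤ 0 := by
  by_cases hinj : Function.Injective (LinearMap.pi f)
  · have hrank : finrank 𝕜 Q = finrank 𝕜 (ι → 𝕜) := by
      have := LinearMap.finrank_le_finrank_of_injective hinj
      rw [finrank_fintype_fun_eq_card] at *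
      omega
    obtain ⟨v, hv⟩ := (LinearMap.injective_iff_surjective_of_finrank_eq_finrank hrank).1 hinj
      (fun _ => -1)
    refine ⟨v, fun h0 => ?_, fun i => (congrFun hv i).le.trans (by norm_num)⟩
    simpa [h0] using congrFun hv (Classical.arbitrary ι)
  · rw [← LinearMap.ker_eq_bot] at hinj
    obtain ⟨v, hv, hv0⟩ := Submodule.exists_mem_ne_zero_of_ne_bot hinj
    exact ⟨v, hv0, fun i => (congrFun (LinearMap.mem_ker.1 hv) i).le⟩

theorem finrank_lt_card_of_forall_exists_smul_mem_cone {ι : Type*} [Fintype ι]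
    {κ : ι → Type*} [∀ i, Fintype (κ i)] (b : ∀ i, κ i → Q)
    (hspan : ∀ i, ⊤ ≤ Submodule.span 𝕜 (Set.range (b i)))
    (hcard : ∀ i, Fintype.card (κ i) = finrank 𝕜 Q)
    (hcover : ∀ v : Q, ∃ i, ∃ t > (0 : 𝕜), ∃ μ : κ i → 𝕜, 0 ≤ μ ∧
      ∑ j, μ j • b i j = t • v) :
    finrank 𝕜 Q < Fintype.card ι := by
  by_contra! hle
  have : Nonempty ι := let ⟨i, _⟩ := hcover 0; ⟨i⟩
  let B i := basisOfTopLeSpanOfCardEqFinrank (b i) (hspan i) (hcard i)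
  obtain ⟨v, hv0, hv⟩ := exists_ne_zero_forall_apply_nonpos_s6 (fun i => (B i).sumCoords) hle
  obtain ⟨i, t, ht, μ, hμ, hsum⟩ := hcover v
  -- `sumCoords` is positive on the cone spanned by `B i`, but nonpositive at `t • v`
  have hμsum : ∑ j, μ j = t * (B i).sumCoords v := by
    have hB : ∀ j, b i j = B i j := fun j => by simp [B]
    rw [← smul_eq_mul, ← map_smul, ← hsum]
    simp only [hB, map_sum, map_smul, Basis.sumCoords_self_apply, smul_eq_mul, mul_one]
  have hμ0 : μ = 0 := funext fun j => (sum_eq_zero_iff_of_nonneg fun j _ => hμ j).1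
    (le_antisymm (hμsum ▸ mul_nonpos_of_nonneg_of_nonpos ht.le (hv i))
      (sum_nonneg fun j _ => hμ j)) j (mem_univ j)
  simp only [hμ0, Pi.zero_apply, zero_smul, sum_const_zero] at hsum
  exact hv0 ((smul_eq_zero.1 hsum.symm).resolve_left ht.ne')

end Cones

theorem eventually_nhds_exists_mem_and_mem {X ι : Type*} [TopologicalSpace X]
    {s : Finset ι} {K : ι → Set X} (hK : ∀ i ∈ s, IsClosed (K i)) {x : X}
    (hx : ⋃ i ∈ s, K i ∈ 𝓝 x) :
    ∀ᶠ y in 𝓝 x, ∃ i ∈ s, x ∈ K i ∧ y ∈ K i := by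
  have hfar : ∀ᶠ y in 𝓝 x, ∀ i ∈ s, x ∉ K i → y ∉ K i :=
    (eventually_all_finset s).2 fun i hi => by
      by_cases hxi : x ∈ K i
      · exact .of_forall fun _ h => absurd hxi h
      · filter_upwards [(hK i hi).isOpen_compl.mem_nhds hxi] with y hy _ using hy
  filter_upwards [hx, hfar] with y hy hfar
  obtain ⟨i, hi, hyi⟩ := Set.mem_iUnion₂.1 hy
  exact ⟨i, hi, not_not.1 fun hxi => hfar i hi hxi hyi, hyi⟩

section Weights

variable {R E : Type*} [Field R] [LinearOrder R] [IsStrictOrderedRing R]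
  [AddCommGroup E] [Module R E]

theorem AffineIndependent.subset_of_pos_weights_mem_convexHull {s t u : Finset E}
    (hs : AffineIndependent R ((↑) : s → E)) (ht : t ⊆ s) (hu : u ⊆ s) {w : E → R}
    (hw₀ : ∀ y ∈ t, 0 < w y) (hw₁ : ∑ y ∈ t, w y = 1)
    (hx : ∑ y ∈ t, w y • y ∈ convexHull R (u : Set E)) : t ⊆ u := by
  classical
  obtain ⟨w', -, hw'₁, hw'x⟩ := Finset.mem_convexHull'.1 hx
  have heq := hs.eq_of_sum_eq_sum_subtype (w₁ := fun y => if y ∈ t then w y else 0)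
    (w₂ := fun y => if y ∈ u then w' y else 0)
    (by simp [sum_ite_mem, inter_eq_right.2 ht, inter_eq_right.2 hu, hw₁, hw'₁])
    (by simp [ite_smul, sum_ite_mem, inter_eq_right.2 ht, inter_eq_right.2 hu, hw'x])
  intro y hyt
  by_contra hyu
  exact (hw₀ y hyt).ne' (by simpa [hyt, hyu] using heq y (ht hyt))

end Weights

theorem Convex.exists_pos_weights_mem_interior {E : Type*} [AddCommGroup E] [Module ℝ E]
    [TopologicalSpace E] [IsTopologicalAddGroup E] [ContinuousConstSMul ℝ E] {P : Set E}
    (hP : Convex ℝ P) {t : Finset E} (htP : convexHull ℝ (t : Set E) ⊆ P) {x₀ : E}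
    (hx₀t : x₀ ∈ convexHull ℝ (t : Set E)) (hx₀P : x₀ ∈ interior P) :
    ∃ w : E → ℝ, (∀ y ∈ t, 0 < w y) ∧ ∑ y ∈ t, w y = 1 ∧
      ∑ y ∈ t, w y • y ∈ interior P := by
  obtain ⟨γ, hγ₀, hγ₁, hγx⟩ := Finset.mem_convexHull'.1 hx₀t
  have hcard : (0 : ℝ) < #t := by
    exact_mod_cast card_pos.2 (coe_nonempty.1 (convexHull_nonempty_iff.1 ⟨x₀, hx₀t⟩))
  -- average the weights of `x₀` with the uniform weights of the centroid
  refine ⟨fun y => (γ y + (#t : ℝ)⁻¹) / 2, fun y hy => by have := hγ₀ y hy; positivity,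
    by simp [← sum_div, sum_add_distrib, hγ₁, hcard.ne'], ?_⟩
  have hc : ∑ y ∈ t, (#t : ℝ)⁻¹ • y ∈ P :=
    htP (Finset.mem_convexHull'.2 ⟨_, fun _ _ => by positivity, by simp [hcard.ne'], rfl⟩)
  convert hP.combo_interior_self_mem_interior hx₀P hc (a := 1 / 2) (b := 1 / 2) (by norm_num)
    (by norm_num) (by norm_num) using 1
  simp only [← hγx, smul_sum, smul_smul, ← sum_add_distrib, ← add_smul]
  exact sum_congr rfl fun y _ => by ring_nf

section Quotient

variable {K E : Type*} [Field K] [AddCommGroup E] [Module K E]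

theorem Finset.sum_smul_mem_affineSpan {s : Finset E} {w : E → K} (hw : ∑ y ∈ s, w y = 1) :
    ∑ y ∈ s, w y • y ∈ affineSpan K (s : Set E) := by
  have h :=
    affineCombination_mem_affineSpan_image hw (s' := s) (fun _ hy hy' => absurd hy hy') id
  rwa [s.affineCombination_eq_linear_combination id w hw, Set.image_id] at h

theorem AffineIndependent.finrank_quotient_vectorSpan [FiniteDimensional K E] {s : Finset E}
    (hs : AffineIndependent K (fun x : (s : Set E) => (x : E))) {n : ℕ}
    (hcard : #s = n + 1) :
    finrank K (E ⧸ vectorSpan K (s : Set E)) = finrank K E - n := by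
  have hspan := hs.finrank_vectorSpan (n := n) (by simp [hcard])
  rw [Subtype.range_coe] at hspan
  have := (vectorSpan K (s : Set E)).finrank_quotient_add_finrank
  omega

theorem mkQ_vectorSpan_sub_eq_zero {s : Set E} {x y : E} (hx : x ∈ affineSpan K s)
    (hy : y ∈ affineSpan K s) : (vectorSpan K s).mkQ (y - x) = 0 := by
  rw [Submodule.mkQ_apply, Submodule.Quotient.mk_eq_zero, ← direction_affineSpan]
  exact AffineSubspace.vsub_mem_direction hy hx

variable [DecidableEq E]

theorem top_le_span_mkQ_sub_of_vectorSpan_eq_top {W U : Finset E}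
    (hW : vectorSpan K (W : Set E) = ⊤) {x : E} (hx : x ∈ affineSpan K (U : Set E)) :
    ⊤ ≤ Submodule.span K
      (Set.range fun w : ↥(W \ U) => (vectorSpan K (U : Set E)).mkQ ((w : E) - x)) := by
  set π := (vectorSpan K (U : Set E)).mkQ
  have hmem : ∀ w ∈ W, π (w - x) ∈ Submodule.span K
      (Set.range fun w : ↥(W \ U) => π ((w : E) - x)) := by
    intro w hw
    by_cases hwU : w ∈ U
    · rw [mkQ_vectorSpan_sub_eq_zero hx (mem_affineSpan K hwU)]
      exact zero_mem _
    · exact Submodule.subset_span ⟨⟨w, mem_sdiff.2 ⟨hw, hwU⟩⟩, rfl⟩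
  rw [← Submodule.range_mkQ (vectorSpan K (U : Set E)), LinearMap.range_eq_map, ← hW,
    vectorSpan_def K (W : Set E), Submodule.map_span, Submodule.span_le]
  rintro _ ⟨_, ⟨a, ha, b, hb, rfl⟩, rfl⟩
  have hab : π (a -ᵥ b) = π (a - x) - π (b - x) := by
    rw [← map_sub, vsub_eq_sub, sub_sub_sub_cancel_right]
  rw [SetLike.mem_coe, hab]
  exact sub_mem (hmem a ha) (hmem b hb)

theorem mkQ_sum_smul_sub_eq_sum_sdiff {W U : Finset E} (hUW : U ⊆ W) {x : E}
    (hx : x ∈ affineSpan K (U : Set E)) {μ : E → K} (hμ : ∑ w ∈ W, μ w = 1) :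
    (vectorSpan K (U : Set E)).mkQ (∑ w ∈ W, μ w • w - x) =
      ∑ w ∈ W \ U, μ w • (vectorSpan K (U : Set E)).mkQ (w - x) := by
  have hcentre : ∑ w ∈ W, μ w • w - x = ∑ w ∈ W, μ w • (w - x) := by
    simp [smul_sub, sum_sub_distrib, ← sum_smul, hμ]
  rw [hcentre, map_sum, ← sum_sdiff hUW, sum_eq_zero (s := U), add_zero]
  · exact sum_congr rfl fun w _ => map_smul _ _ _
  · intro u hu
    rw [map_smul, mkQ_vectorSpan_sub_eq_zero hx (mem_affineSpan K hu), smul_zero]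

end Quotient

namespace IsTriangulation

variable {d : ℕ} {P V : Set (Fin d → ℝ)} {Γ : Finset (Finset (Fin d → ℝ))}

theorem vectorSpan_eq_top (hΓ : IsTriangulation d P V Γ) {W : Finset (Fin d → ℝ)}
    (hW : W ∈ Γ) : vectorSpan ℝ (W : Set (Fin d → ℝ)) = ⊤ := by
  obtain ⟨hcard, hind, -⟩ := hΓ.1 W hW
  apply Submodule.eq_top_of_finrank_eq
  rw [finrank_fin_fun]
  have := hind.finrank_vectorSpan (n := d) (by simp [hcard])
  rwa [Subtype.range_coe] at this

theorem convexHull_subset (hΓ : IsTriangulation d P V Γ) {W : Finset (Fin d → ℝ)}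
    (hW : W ∈ Γ) : convexHull ℝ (W : Set (Fin d → ℝ)) ⊆ P :=
  fun _ hx => hΓ.2.2.2 ▸ Set.mem_iUnion₂.2 ⟨W, hW, hx⟩

theorem subset_of_pos_weights_mem_convexHull (hΓ : IsTriangulation d P V Γ)
    {W₀ U W : Finset (Fin d → ℝ)} (hW₀ : W₀ ∈ Γ) (hUW₀ : U ⊆ W₀) (hW : W ∈ Γ)
    {w : (Fin d → ℝ) → ℝ} (hw₀ : ∀ y ∈ U, 0 < w y) (hw₁ : ∑ y ∈ U, w y = 1)
    (hx : ∑ y ∈ U, w y • y ∈ convexHull ℝ (W : Set (Fin d → ℝ))) : U ⊆ W := by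
  obtain ⟨U', hU'W, hU'W₀, hcap⟩ := hΓ.2.2.1 W hW W₀ hW₀
  have hxU : ∑ y ∈ U, w y • y ∈ convexHull ℝ (U : Set (Fin d → ℝ)) :=
    Finset.mem_convexHull'.2 ⟨w, fun y hy => (hw₀ y hy).le, hw₁, rfl⟩
  have hxU' : ∑ y ∈ U, w y • y ∈ convexHull ℝ (U' : Set (Fin d → ℝ)) :=
    hcap ▸ ⟨hx, convexHull_mono (coe_subset.2 hUW₀) hxU⟩
  exact ((hΓ.1 W₀ hW₀).2.1.subset_of_pos_weights_mem_convexHull hUW₀ hU'W₀ hw₀ hw₁ hxU').trans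
    hU'W

theorem exists_smul_mem_cone [DecidableEq (Fin d → ℝ)] (hΓ : IsTriangulation d P V Γ)
    {W₀ U : Finset (Fin d → ℝ)} (hW₀ : W₀ ∈ Γ) (hUW₀ : U ⊆ W₀)
    {w : (Fin d → ℝ) → ℝ} (hw₀ : ∀ y ∈ U, 0 < w y) (hw₁ : ∑ y ∈ U, w y = 1)
    (hx : ∑ y ∈ U, w y • y ∈ interior P)
    (v : (Fin d → ℝ) ⧸ vectorSpan ℝ (U : Set (Fin d → ℝ))) :
    ∃ W ∈ Γ, U ⊆ W ∧ ∃ t > (0 : ℝ), ∃ μ : (Fin d → ℝ) → ℝ, (∀ y ∈ W, 0 ≤ μ y) ∧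
      ∑ y ∈ W \ U, μ y • (vectorSpan ℝ (U : Set (Fin d → ℝ))).mkQ (y - ∑ y ∈ U, w y • y) =
        t • v := by
  set x := ∑ y ∈ U, w y • y
  obtain ⟨v', rfl⟩ := Submodule.mkQ_surjective _ v
  have hnear : ∀ᶠ y in 𝓝 x, ∃ W ∈ Γ, x ∈ convexHull ℝ (W : Set (Fin d → ℝ)) ∧
      y ∈ convexHull ℝ (W : Set (Fin d → ℝ)) :=
    eventually_nhds_exists_mem_and_mem
      (fun W _ => (W.finite_toSet.isCompact_convexHull ℝ).isClosed)
      (hΓ.2.2.2 ▸ mem_interior_iff_mem_nhds.1 hx)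
  have hray : Tendsto (fun t : ℝ => x + t • v') (𝓝[>] 0) (𝓝 x) :=
    tendsto_nhdsWithin_of_tendsto_nhds <| by
      simpa using ((tendsto_id (x := 𝓝 (0 : ℝ))).smul_const v').const_add x
  obtain ⟨t, ⟨W, hW, hxW, hyW⟩, ht⟩ := ((hray.eventually hnear).and self_mem_nhdsWithin).exists
  have hUW := hΓ.subset_of_pos_weights_mem_convexHull hW₀ hUW₀ hW hw₀ hw₁ hxW
  obtain ⟨μ, hμ₀, hμ₁, hμy⟩ := Finset.mem_convexHull'.1 hyW
  refine ⟨W, hW, hUW, t, ht, μ, hμ₀, ?_⟩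
  rw [← mkQ_sum_smul_sub_eq_sum_sdiff hUW (sum_smul_mem_affineSpan hw₁) hμ₁, hμy,
    add_sub_cancel_left, map_smul]

end IsTriangulation

theorem card_simplices_sharing_interior_face_general
    (d : ℕ) (S : Finset (Fin d → ℝ))
    (P : Set (Fin d → ℝ)) (hP : P = convexHull ℝ (S : Set (Fin d → ℝ)))
    (V : Finset (Fin d → ℝ))
    (Γ : Finset (Finset (Fin d → ℝ)))
    (hΓ : IsTriangulation d P (V : Set (Fin d → ℝ)) Γ)
    (e : ℕ)
    (U : Finset (Fin d → ℝ)) (hUcard : U.card = e + 1)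
    (W₀ : Finset (Fin d → ℝ)) (hW₀ : W₀ ∈ Γ) (hUW₀ : U ⊆ W₀)
    (hUbd : ¬ convexHull ℝ (U : Set (Fin d → ℝ)) ⊆ frontier P)
    (q : ℕ) (hq : q = (Γ.filter (fun W => U ⊆ W)).card) :
    d - e + 1 ≤ q := by
  classical
  have hUP := (convexHull_mono (coe_subset.2 hUW₀)).trans (hΓ.convexHull_subset hW₀)
  obtain ⟨x₀, hx₀U, hx₀fr⟩ := Set.not_subset.1 hUbd
  have hPconv : Convex ℝ P := hP ▸ convex_convexHull ℝ _
  obtain ⟨w, hw₀, hw₁, hx⟩ := hPconv.exists_pos_weights_mem_interior hUP hx₀U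
    (self_sdiff_frontier P ▸ ⟨hUP hx₀U, hx₀fr⟩)
  set x := ∑ y ∈ U, w y • y
  set A := vectorSpan ℝ (U : Set (Fin d → ℝ))
  have hQ : finrank ℝ ((Fin d → ℝ) ⧸ A) = d - e := by
    rw [((hΓ.1 W₀ hW₀).2.1.mono (coe_subset.2 hUW₀)).finrank_quotient_vectorSpan hUcard,
      finrank_fin_fun]
  have hcones := finrank_lt_card_of_forall_exists_smul_mem_cone (𝕜 := ℝ)
    (ι := Γ.filter (fun W => U ⊆ W)) (κ := fun W => ↥(W.1 \ U)) (fun _ y => A.mkQ (y.1 - x))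
    (fun W => top_le_span_mkQ_sub_of_vectorSpan_eq_top
      (hΓ.vectorSpan_eq_top (mem_filter.1 W.2).1) (sum_smul_mem_affineSpan hw₁))
    (fun W => by
      rw [Fintype.card_coe, card_sdiff_of_subset (mem_filter.1 W.2).2,
        (hΓ.1 _ (mem_filter.1 W.2).1).1, hUcard, hQ]
      omega)
    (fun v => by
      obtain ⟨W, hW, hUW, t, ht, μ, hμ₀, hsum⟩ := hΓ.exists_smul_mem_cone hW₀ hUW₀ hw₀ hw₁ hx v
      exact ⟨⟨W, mem_filter.2 ⟨hW, hUW⟩⟩, t, ht, fun y => μ y,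
        fun y => hμ₀ y (mem_sdiff.1 y.2).1, (sum_coe_sort _ _).trans hsum⟩)
  rw [hQ, Fintype.card_coe, ← hq] at hcones
  omega

/-- Let `P ⊂ ℝ^d` be a convex polytope of dimension `d`, `V ⊆ P` a finite set
containing every vertex (extreme point) of `P`, and `Γ` a triangulation of `P` on
`V`.  Let `F₀` be a face of dimension `e` (with `1 ≤ e ≤ d`) of some simplex of `Γ`
(given by its vertex set `U`, a set of `e + 1` vertices of some simplex of `Γ`)
such that `F₀` is not contained in the boundary `∂P` of `P`.  Then the number `q`
of `d`-simplices `G ∈ Γ` having `F₀` as a face satisfies `q ≥ d − e + 1`. -/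
theorem card_simplices_sharing_interior_face
    (d : ℕ) (S : Finset (Fin d → ℝ))
    (P : Set (Fin d → ℝ)) (hP : P = convexHull ℝ (S : Set (Fin d → ℝ)))
    (hdim : affineSpan ℝ (S : Set (Fin d → ℝ)) = ⊤)
    (V : Finset (Fin d → ℝ)) (hVP : (V : Set (Fin d → ℝ)) ⊆ P)
    (hvert : Set.extremePoints ℝ P ⊆ (V : Set (Fin d → ℝ)))
    (Γ : Finset (Finset (Fin d → ℝ)))
    (hΓ : IsTriangulation d P (V : Set (Fin d → ℝ)) Γ)
    (e : ℕ) (he1 : 1 ≤ e) (hed : e ≤ d)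
    (U : Finset (Fin d → ℝ)) (hUcard : U.card = e + 1)
    (W₀ : Finset (Fin d → ℝ)) (hW₀ : W₀ ∈ Γ) (hUW₀ : U ⊆ W₀)
    (hUbd : ¬ convexHull ℝ (U : Set (Fin d → ℝ)) ⊆ frontier P)
    (q : ℕ) (hq : q = (Γ.filter (fun W => U ⊆ W)).card) :
    d - e + 1 ≤ q :=
  card_simplices_sharing_interior_face_general d S P hP V Γ hΓ e U hUcard W₀ hW₀ hUW₀ hUbd q hq
end
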